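/- arXiv:1912.03220 — 2 statements merged into one kernel-verified Lean document; each statement's English description precedes it below -/
import Mathlib

section
/- Let F_t = {f_{(i,t)}(x) := t·f_i(x) + q_i : 1 ≤ i ≤ N} be a one-parameter affine family on ℝ^d with t_0 = 1/ρ(F). The following are equivalent: (1) F_t is semi-linear; (2) for each i = 1, …, N, the point q_i is the unique fixed point of f_{(i,t)} for all t ∈ [0, t_0). Moreover, if these hold then q_i is also a fixed point of f_{(i,t_0)} for all i. -/
/-!
At `t = 0` the map `f_{(i,0)}` is constant with value `q_i`, so an affine map `h_i` conjugating
it to a linear map sends `q_i` to `0`; hence `q_i` is fixed by every `f_{(i,t)}`, and taking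
`t > 0` this forces `L_i q_i + a_i = 0`. Conversely, under this identity
`f_{(i,t)}(x) = t L_i (x - q_i) + q_i` for every `t` (including `t₀`), which is linear after
translating `q_i` to the origin. A second fixed point `x ≠ q_i` for `0 < t < t₀` would make
`x - q_i` an eigenvector of `L_i` for the eigenvalue `1/t > ρ(F)`, impossible since the powers of
an eigenvalue are bounded by the norms of the powers `L_i^k`.
-/

open Metric Filter Set
open scoped RealInnerProductSpace

noncomputable section

/-- The Hutchinson operator associated with a family of maps. -/
def hutch {ι E : Type*} (f : ι → E → E) (K : Set E) : Set E := ⋃ i, f i '' K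

/-- `A` is the attractor of the IFS `f`: `A` is a nonempty compact set such that the iterates
of the Hutchinson operator applied to any nonempty compact set converge to `A` in the
Hausdorff metric. -/
def IsAttractor {ι E : Type*} [MetricSpace E] (f : ι → E → E) (A : Set E) : Prop :=
  A.Nonempty ∧ IsCompact A ∧
    ∀ K : Set E, K.Nonempty → IsCompact K →
      Tendsto (fun n : ℕ => hausdorffDist ((hutch f)^[n] K) A) atTop (nhds 0)

/-- The joint spectral radius of a finite family of continuous linear maps. -/
def jsr {E : Type*} [NormedAddCommGroup E] [NormedSpace ℝ E] {N : ℕ}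
    (L : Fin N → E →L[ℝ] E) : ℝ :=
  limsup (fun k : ℕ =>
    (⨆ σ : Fin k → Fin N, ‖(List.ofFn fun j : Fin k => L (σ j)).prod‖) ^ ((1 : ℝ) / (k : ℝ)))
    atTop

/-- The one-parameter affine family `f_{(i,t)}(x) = t • f_i(x) + q_i` where
`f_i(x) = L_i x + a_i`. -/
def fam {E : Type*} [NormedAddCommGroup E] [NormedSpace ℝ E] {N : ℕ}
    (L : Fin N → E →L[ℝ] E) (a q : Fin N → E) (t : ℝ) (i : Fin N) (x : E) : E :=
  t • (L i x + a i) + q i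

/-- The family is linear: every `f_{(i,t)}`, `t ∈ [0, t₀)`, is conjugate to a linear map by a
single invertible affine map `h` independent of `i` and `t`. -/
def IsLinearFamily {E : Type*} [NormedAddCommGroup E] [NormedSpace ℝ E] {N : ℕ}
    (L : Fin N → E →L[ℝ] E) (a q : Fin N → E) : Prop :=
  ∃ h : E ≃ᵃ[ℝ] E, ∀ i : Fin N, ∀ t : ℝ, 0 ≤ t → t < 1 / jsr L →
    ∃ M : E →ₗ[ℝ] E, ∀ x, fam L a q t i x = h.symm (M (h x))

/-- The family is quasi-linear: for each `t ∈ [0, t₀)` there is an invertible affine map `h_t`,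
independent of `i`, conjugating every `f_{(i,t)}` to a linear map. -/
def IsQuasiLinearFamily {E : Type*} [NormedAddCommGroup E] [NormedSpace ℝ E] {N : ℕ}
    (L : Fin N → E →L[ℝ] E) (a q : Fin N → E) : Prop :=
  ∀ t : ℝ, 0 ≤ t → t < 1 / jsr L → ∃ h : E ≃ᵃ[ℝ] E, ∀ i : Fin N,
    ∃ M : E →ₗ[ℝ] E, ∀ x, fam L a q t i x = h.symm (M (h x))

/-- The family is semi-linear: for each `i` there is an invertible affine map `h_i`,
independent of `t`, conjugating `f_{(i,t)}` to a linear map for all `t ∈ [0, t₀)`. -/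
def IsSemiLinearFamily {E : Type*} [NormedAddCommGroup E] [NormedSpace ℝ E] {N : ℕ}
    (L : Fin N → E →L[ℝ] E) (a q : Fin N → E) : Prop :=
  ∀ i : Fin N, ∃ h : E ≃ᵃ[ℝ] E, ∀ t : ℝ, 0 ≤ t → t < 1 / jsr L →
    ∃ M : E →ₗ[ℝ] E, ∀ x, fam L a q t i x = h.symm (M (h x))

/-- The hyperplane `{x | φ x = c}` (with `φ` a nonzero linear functional) separates `S`:
it misses `S` and `S` meets both open half-spaces. -/
def SeparatesHyp {E : Type*} [AddCommGroup E] [Module ℝ E]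
    (φ : E →ₗ[ℝ] ℝ) (c : ℝ) (S : Set E) : Prop :=
  φ ≠ 0 ∧ (∀ x ∈ S, φ x ≠ c) ∧ (∃ x ∈ S, φ x < c) ∧ (∃ x ∈ S, c < φ x)

/-- A set is strongly disconnected if some hyperplane separates it. -/
def StronglyDisconnected {E : Type*} [AddCommGroup E] [Module ℝ E] (S : Set E) : Prop :=
  ∃ (φ : E →ₗ[ℝ] ℝ) (c : ℝ), SeparatesHyp φ c S

/-- A set is weakly connected if no hyperplane separates it. -/
def WeaklyConnected {E : Type*} [AddCommGroup E] [Module ℝ E] (S : Set E) : Prop :=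
  ¬ StronglyDisconnected S

/-- A weak component of a compact set `S` is a maximal weakly connected compact subset of `S`. -/
def IsWeakComponent {E : Type*} [NormedAddCommGroup E] [NormedSpace ℝ E]
    (S C : Set E) : Prop :=
  C.Nonempty ∧ C ⊆ S ∧ IsCompact C ∧ WeaklyConnected C ∧
    ∀ C' : Set E, C' ⊆ S → IsCompact C' → WeaklyConnected C' → C ⊆ C' → C' = C

/-- A (nondegenerate right circular) cone with apex `x`, axis direction `v`, radius `r` and
half-angle `θ`. -/
def coneSet {E : Type*} [NormedAddCommGroup E] [InnerProductSpace ℝ E]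
    (x v : E) (r θ : ℝ) : Set E :=
  {y | ‖y - x‖ ≤ r ∧ ‖y - x‖ * Real.cos θ ≤ ⟪y - x, v⟫}

/-- A boundary point `x` of `K` is a cusp of `K` if no cone with apex `x` is contained in `K`. -/
def IsCuspOfSet {E : Type*} [NormedAddCommGroup E] [InnerProductSpace ℝ E]
    (K : Set E) (x : E) : Prop :=
  x ∈ frontier K ∧ ∀ (v : E) (r θ : ℝ), ‖v‖ = 1 → 0 < r → 0 < θ → θ < Real.pi / 2 →
    ¬ coneSet x v r θ ⊆ K

/-- The one-parameter family is tame: whenever the attractor `A_t` has nonempty interior,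
some fixed point of a map of `F_t` is not a cusp of `A_t`. -/
def TameFamily {E : Type*} [NormedAddCommGroup E] [InnerProductSpace ℝ E] {N : ℕ}
    (L : Fin N → E →L[ℝ] E) (a q : Fin N → E) : Prop :=
  ∀ t : ℝ, 0 ≤ t → t < 1 / jsr L → ∀ A : Set E, IsAttractor (fam L a q t) A →
    (interior A).Nonempty → ∃ (i : Fin N) (x : E), fam L a q t i x = x ∧ ¬ IsCuspOfSet A x

end

section JointSpectralRadius

variable {E : Type*} [NormedAddCommGroup E] [NormedSpace ℝ E] {N : ℕ}

noncomputable def maxWordNorm (L : Fin N → E →L[ℝ] E) (k : ℕ) : ℝ :=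
  ⨆ σ : Fin k → Fin N, ‖(List.ofFn fun j : Fin k => L (σ j)).prod‖

lemma jsr_eq_limsup_maxWordNorm (L : Fin N → E →L[ℝ] E) :
    jsr L = limsup (fun k : ℕ => maxWordNorm L k ^ (k⁻¹ : ℝ)) atTop := by
  simp only [jsr, maxWordNorm, one_div]

lemma maxWordNorm_nonneg (L : Fin N → E →L[ℝ] E) (k : ℕ) : 0 ≤ maxWordNorm L k :=
  Real.iSup_nonneg fun _ => norm_nonneg _

lemma norm_list_prod_le_pow {C : ℝ} (hC : 0 ≤ C) :
    ∀ l : List (E →L[ℝ] E), (∀ f ∈ l, ‖f‖ ≤ C) → ‖l.prod‖ ≤ C ^ l.length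
  | [], _ => by
    rw [List.prod_nil, List.length_nil, pow_zero]
    exact ContinuousLinearMap.norm_id_le
  | f :: l, hl => by
    rw [List.prod_cons, List.length_cons, pow_succ']
    exact (norm_mul_le _ _).trans <| mul_le_mul (hl f List.mem_cons_self)
      (norm_list_prod_le_pow hC l fun g hg => hl g (List.mem_cons_of_mem f hg))
      (norm_nonneg _) hC

lemma maxWordNorm_le_pow (L : Fin N → E →L[ℝ] E) {C : ℝ} (hC : 0 ≤ C) (hL : ∀ i, ‖L i‖ ≤ C)
    (k : ℕ) : maxWordNorm L k ≤ C ^ k :=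
  Real.iSup_le (fun σ => by
    simpa using norm_list_prod_le_pow hC (List.ofFn fun j => L (σ j)) fun f hf => by
      obtain ⟨j, rfl⟩ := List.mem_ofFn.mp hf
      exact hL _)
    (pow_nonneg hC k)

lemma norm_pow_le_maxWordNorm (L : Fin N → E →L[ℝ] E) (i : Fin N) (k : ℕ) :
    ‖L i ^ k‖ ≤ maxWordNorm L k := by
  simpa [maxWordNorm, List.ofFn_const, List.prod_replicate] using
    le_ciSup (Set.finite_range fun σ : Fin k → Fin N => ‖(List.ofFn fun j => L (σ j)).prod‖).bddAbove
      fun _ => i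

lemma isBoundedUnder_maxWordNorm_rpow_inv (L : Fin N → E →L[ℝ] E) :
    IsBoundedUnder (· ≤ ·) atTop fun k : ℕ => maxWordNorm L k ^ (k⁻¹ : ℝ) := by
  obtain ⟨C, hC⟩ := (Set.finite_range fun i => ‖L i‖).bddAbove
  set C' := max C 1
  refine isBoundedUnder_of ⟨C', fun k => ?_⟩
  rcases eq_or_ne k 0 with rfl | hk
  · simp [C']
  calc maxWordNorm L k ^ (k⁻¹ : ℝ)
      ≤ (C' ^ k) ^ (k⁻¹ : ℝ) := by
        gcongr
        · exact maxWordNorm_nonneg L k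
        · exact maxWordNorm_le_pow L (by positivity)
            (fun i => (hC ⟨i, rfl⟩).trans (le_max_left _ _)) k
    _ = C' := Real.pow_rpow_inv_natCast (by positivity) hk

lemma abs_le_opNorm_of_apply_eq_smul (T : E →L[ℝ] E) {c : ℝ} {y : E} (hy : y ≠ 0)
    (h : T y = c • y) : |c| ≤ ‖T‖ := by
  have := T.le_opNorm y
  rw [h, norm_smul, Real.norm_eq_abs] at this
  exact le_of_mul_le_mul_right this (norm_pos_iff.mpr hy)

lemma pow_apply_eq_pow_smul (T : E →L[ℝ] E) {c : ℝ} {y : E} (h : T y = c • y) (k : ℕ) :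
    (T ^ k) y = c ^ k • y := by
  induction k with
  | zero => simp
  | succ k ih => rw [pow_succ', mul_apply_eq_comp, ih, map_smul, h, smul_smul, pow_succ]

lemma le_jsr_of_apply_eq_smul (L : Fin N → E →L[ℝ] E) {i : Fin N} {c : ℝ} (hc : 0 ≤ c)
    {y : E} (hy : y ≠ 0) (h : L i y = c • y) : c ≤ jsr L := by
  rw [jsr_eq_limsup_maxWordNorm]
  refine le_limsup_of_frequently_le ?_ (isBoundedUnder_maxWordNorm_rpow_inv L)
  refine (eventually_ne_atTop 0).frequently.mono fun k hk => ?_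
  calc c = (c ^ k) ^ (k⁻¹ : ℝ) := (Real.pow_rpow_inv_natCast hc hk).symm
    _ ≤ maxWordNorm L k ^ (k⁻¹ : ℝ) := by
      gcongr
      calc c ^ k = |c ^ k| := (abs_of_nonneg (pow_nonneg hc k)).symm
        _ ≤ ‖L i ^ k‖ := abs_le_opNorm_of_apply_eq_smul _ hy (pow_apply_eq_pow_smul _ h k)
        _ ≤ maxWordNorm L k := norm_pow_le_maxWordNorm L i k

end JointSpectralRadius

section AffineFamily

variable {E : Type*} [NormedAddCommGroup E] [NormedSpace ℝ E] {N : ℕ}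
  (L : Fin N → E →L[ℝ] E) (a q : Fin N → E)

lemma fam_apply_self_of_add_eq_zero {i : Fin N} (hq : L i (q i) + a i = 0) (t : ℝ) :
    fam L a q t i (q i) = q i := by
  simp [fam, hq]

lemma add_eq_zero_of_fam_apply_self {i : Fin N} {t : ℝ} (ht : t ≠ 0)
    (hfix : fam L a q t i (q i) = q i) : L i (q i) + a i = 0 := by
  rw [fam, add_eq_right] at hfix
  exact (smul_eq_zero.mp hfix).resolve_left ht

lemma fam_apply_of_add_eq_zero {i : Fin N} (hq : L i (q i) + a i = 0) (t : ℝ) (x : E) :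
    fam L a q t i x = t • L i (x - q i) + q i := by
  rw [map_sub, eq_neg_of_add_eq_zero_left hq, sub_neg_eq_add, fam]

lemma eq_of_fam_apply_eq_self {i : Fin N} (hq : L i (q i) + a i = 0) {t : ℝ} (ht : 0 ≤ t)
    (ht₀ : t < 1 / jsr L) {x : E} (hx : fam L a q t i x = x) : x = q i := by
  rw [fam_apply_of_add_eq_zero L a q hq] at hx
  rcases ht.eq_or_lt with rfl | htpos
  · simpa using hx.symm
  by_contra hne
  have hy : x - q i ≠ 0 := sub_ne_zero.mpr hne
  rw [← eq_sub_iff_add_eq] at hx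
  have heig : L i (x - q i) = t⁻¹ • (x - q i) := by
    conv_rhs => rw [← hx]
    rw [inv_smul_smul₀ htpos.ne']
  have := inv_le_of_inv_le₀ htpos (le_jsr_of_apply_eq_smul L (inv_nonneg.mpr ht) hy heig)
  rw [one_div] at ht₀
  exact this.not_gt ht₀

lemma add_eq_zero_of_isSemiLinearFamily (hρ : 0 < jsr L) (hsl : IsSemiLinearFamily L a q)
    (i : Fin N) : L i (q i) + a i = 0 := by
  obtain ⟨h, hh⟩ := hsl i
  have ht₀ : 0 < 1 / jsr L := by positivity
  have hq : h (q i) = 0 := by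
    obtain ⟨M, hM⟩ := hh 0 le_rfl ht₀
    have : q i = h.symm 0 := by simpa [fam] using hM (h.symm 0)
    rw [this, AffineEquiv.apply_symm_apply]
  obtain ⟨M, hM⟩ := hh _ (half_pos ht₀).le (half_lt_self ht₀)
  refine add_eq_zero_of_fam_apply_self L a q (half_pos ht₀).ne' ?_
  rw [hM, hq, map_zero, ← hq, AffineEquiv.symm_apply_apply]

lemma isSemiLinearFamily_of_add_eq_zero (hq : ∀ i, L i (q i) + a i = 0) :
    IsSemiLinearFamily L a q := fun i =>
  ⟨AffineEquiv.constVAdd ℝ E (-q i), fun t _ _ => ⟨t • (L i : E →ₗ[ℝ] E), fun x => by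
    rw [fam_apply_of_add_eq_zero L a q (hq i)]
    simp only [AffineEquiv.constVAdd_apply, AffineEquiv.constVAdd_symm, vadd_eq_add, neg_neg,
      LinearMap.smul_apply, ContinuousLinearMap.coe_coe]
    rw [neg_add_eq_sub, add_comm]⟩⟩

end AffineFamily

theorem stmt5_general {d N : ℕ}
    (L : Fin N → EuclideanSpace ℝ (Fin d) →L[ℝ] EuclideanSpace ℝ (Fin d))
    (a q : Fin N → EuclideanSpace ℝ (Fin d))
    (hρ : 0 < jsr L) :
    (IsSemiLinearFamily L a q ↔
      ∀ (i : Fin N) (t : ℝ), 0 ≤ t → t < 1 / jsr L →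
        fam L a q t i (q i) = q i ∧ ∀ x, fam L a q t i x = x → x = q i) ∧
    (IsSemiLinearFamily L a q →
      ∀ i : Fin N, fam L a q (1 / jsr L) i (q i) = q i) := by
  have ht₀ : 0 < 1 / jsr L := by positivity
  have hsl : IsSemiLinearFamily L a q ↔ ∀ i, L i (q i) + a i = 0 :=
    ⟨add_eq_zero_of_isSemiLinearFamily L a q hρ, isSemiLinearFamily_of_add_eq_zero L a q⟩
  refine ⟨⟨fun h i t ht ht' => ?_, fun h => hsl.2 fun i => ?_⟩, fun h i => ?_⟩
  · exact ⟨fam_apply_self_of_add_eq_zero L a q (hsl.1 h i) t,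
      fun x => eq_of_fam_apply_eq_self L a q (hsl.1 h i) ht ht'⟩
  · exact add_eq_zero_of_fam_apply_self L a q (half_pos ht₀).ne'
      (h i _ (half_pos ht₀).le (half_lt_self ht₀)).1
  · exact fam_apply_self_of_add_eq_zero L a q (hsl.1 h i) _

/-- A one-parameter affine family is semi-linear iff for each `i` the point
`q_i` is the unique fixed point of `f_{(i,t)}` for all `t ∈ [0, t₀)`. Moreover, in that case
`q_i` is also a fixed point of `f_{(i,t₀)}` for all `i`. -/
theorem stmt5 {d N : ℕ} (hN : 2 ≤ N)
    (L : Fin N → EuclideanSpace ℝ (Fin d) →L[ℝ] EuclideanSpace ℝ (Fin d))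
    (hL : ∀ i, Function.Bijective (L i))
    (a q : Fin N → EuclideanSpace ℝ (Fin d))
    (hρ : 0 < jsr L) :
    (IsSemiLinearFamily L a q ↔
      ∀ (i : Fin N) (t : ℝ), 0 ≤ t → t < 1 / jsr L →
        fam L a q t i (q i) = q i ∧ ∀ x, fam L a q t i x = x → x = q i) ∧
    (IsSemiLinearFamily L a q →
      ∀ i : Fin N, fam L a q (1 / jsr L) i (q i) = q i) :=
  stmt5_general L a q hρ
end

section
/- Let A be the attractor of an IFS F on ℝ^d. If there exist a closed ball B ⊆ ℝ^d with nonempty interior and a positive integer n_0 such that B ⊆ F^{n_0}(B) (the n_0-fold iterate of the Hutchinson operator applied to B), then B ⊆ A; in particular, A has nonempty interior. -/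
open Metric Filter Set
open scoped RealInnerProductSpace

/-!
If `B ⊆ F^{n₀}(B)`, monotonicity of the Hutchinson operator gives `B ⊆ F^{k n₀}(B)` for every
`k`. These compact sets converge to `A` in the Hausdorff metric, and a point lying in all of
them is at distance at most `d_H(F^{k n₀}(B), A) → 0` from the closed set `A`, hence lies in `A`.
-/

open Topology

theorem hutch_mono {ι E : Type*} (f : ι → E → E) : Monotone (hutch f) :=
  fun _ _ hst => iUnion_mono fun _ => image_mono hst

theorem IsCompact.hutch_iterate {ι E : Type*} [Finite ι] [TopologicalSpace E]
    {f : ι → E → E} (hf : ∀ i, Continuous (f i)) {K : Set E} (hK : IsCompact K) (n : ℕ) :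
    IsCompact ((hutch f)^[n] K) := by
  induction n with
  | zero => exact hK
  | succ n ih =>
    rw [Function.iterate_succ_apply']
    exact isCompact_iUnion fun i => ih.image (hf i)

theorem Monotone.le_iterate_of_le_apply {α : Type*} [Preorder α] {g : α → α}
    (hg : Monotone g) {x : α} (hx : x ≤ g x) (k : ℕ) : x ≤ g^[k] x := by
  induction k with
  | zero => exact le_rfl
  | succ k ih =>
    rw [Function.iterate_succ_apply]
    exact ih.trans (hg.iterate k hx)

theorem mem_of_forall_mem_of_tendsto_hausdorffDist {X : Type*} [MetricSpace X]
    {S : ℕ → Set X} {A : Set X} {x : X} (hA : IsClosed A) (hAne : A.Nonempty)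
    (hAb : Bornology.IsBounded A) (hS : ∀ k, Bornology.IsBounded (S k)) (hx : ∀ k, x ∈ S k)
    (hlim : Tendsto (fun k => hausdorffDist (S k) A) atTop (𝓝 0)) : x ∈ A := by
  have hle : ∀ k, infDist x A ≤ hausdorffDist (S k) A := fun k =>
    infDist_le_hausdorffDist_of_mem (hx k)
      (hausdorffEDist_ne_top_of_nonempty_of_bounded ⟨x, hx k⟩ hAne (hS k) hAb)
  have hzero : infDist x A = 0 := le_antisymm (ge_of_tendsto' hlim hle) infDist_nonneg
  exact (hA.mem_iff_infDist_zero hAne).2 hzero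

theorem IsAttractor.subset_of_subset_hutch_iterate {ι E : Type*} [Finite ι] [MetricSpace E]
    {f : ι → E → E} (hf : ∀ i, Continuous (f i)) {A : Set E} (hA : IsAttractor f A)
    {K : Set E} (hKne : K.Nonempty) (hK : IsCompact K) {n : ℕ} (hn : 0 < n)
    (hKn : K ⊆ (hutch f)^[n] K) : K ⊆ A := by
  have hsub : ∀ k, K ⊆ (hutch f)^[n * k] K := fun k => by
    rw [Function.iterate_mul]
    exact ((hutch_mono f).iterate n).le_iterate_of_le_apply hKn k
  have hlim : Tendsto (fun k => hausdorffDist ((hutch f)^[n * k] K) A) atTop (𝓝 0) :=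
    (hA.2.2 K hKne hK).comp (tendsto_id.const_mul_atTop' hn)
  exact fun x hx => mem_of_forall_mem_of_tendsto_hausdorffDist hA.2.1.isClosed hA.1
    hA.2.1.isBounded (fun k => (hK.hutch_iterate hf _).isBounded) (fun k => hsub k hx) hlim

theorem stmt15_general {d N : ℕ}
    (L : Fin N → EuclideanSpace ℝ (Fin d) →L[ℝ] EuclideanSpace ℝ (Fin d))
    (a : Fin N → EuclideanSpace ℝ (Fin d))
    (f : Fin N → EuclideanSpace ℝ (Fin d) → EuclideanSpace ℝ (Fin d))
    (hf : ∀ i x, f i x = L i x + a i)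
    (A : Set (EuclideanSpace ℝ (Fin d))) (hA : IsAttractor f A)
    (x₀ : EuclideanSpace ℝ (Fin d)) (r : ℝ) (hr : 0 < r)
    (n₀ : ℕ) (hn₀ : 0 < n₀)
    (hB : closedBall x₀ r ⊆ (hutch f)^[n₀] (closedBall x₀ r)) :
    closedBall x₀ r ⊆ A ∧ (interior A).Nonempty := by
  have hfc : ∀ i, Continuous (f i) := fun i => by
    rw [funext (hf i)]
    fun_prop
  have hBA : closedBall x₀ r ⊆ A := hA.subset_of_subset_hutch_iterate hfc
    (nonempty_closedBall.2 hr.le) (isCompact_closedBall x₀ r) hn₀ hB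
  exact ⟨hBA, x₀, interior_mono hBA (mem_interior_iff_mem_nhds.2 (closedBall_mem_nhds x₀ hr))⟩

/-- Let `A` be the attractor of an IFS `F` on `ℝ^d`. If `B` is a closed
ball of positive radius and `n₀` a positive integer with `B ⊆ F^{n₀}(B)`, then `B ⊆ A`; in
particular `A` has nonempty interior. -/
theorem stmt15 {d N : ℕ} (hN : 2 ≤ N)
    (L : Fin N → EuclideanSpace ℝ (Fin d) →L[ℝ] EuclideanSpace ℝ (Fin d))
    (hL : ∀ i, Function.Bijective (L i))
    (a : Fin N → EuclideanSpace ℝ (Fin d))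
    (f : Fin N → EuclideanSpace ℝ (Fin d) → EuclideanSpace ℝ (Fin d))
    (hf : ∀ i x, f i x = L i x + a i)
    (A : Set (EuclideanSpace ℝ (Fin d))) (hA : IsAttractor f A)
    (x₀ : EuclideanSpace ℝ (Fin d)) (r : ℝ) (hr : 0 < r)
    (n₀ : ℕ) (hn₀ : 0 < n₀)
    (hB : closedBall x₀ r ⊆ (hutch f)^[n₀] (closedBall x₀ r)) :
    closedBall x₀ r ⊆ A ∧ (interior A).Nonempty :=
  stmt15_general L a f hf A hA x₀ r hr n₀ hn₀ hB
end
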